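/- (Gradient-like on the collision manifold) Along any solution of the blown-up equations lying in the full collision manifold M₀ = {r = 0, H̃ = 0}, one has ν' = K_sh + ½J̃² ≥ 0, where K_sh = ½⟨y_hor, y_hor⟩ is the shape kinetic energy, J̃ = ⟨is,y⟩, and ν = ⟨s,y⟩. In particular ν is nondecreasing on M₀. -/

import Mathlib

/-!
Differentiating `ν = ⟨s, y⟩` along the blown-up flow and using Euler's identity
`⟨s, ∇U(s)⟩ = -U(s)` gives `ν' = ⟨y, y⟩ - ½ν² - U(s) = K̃ - ½ν² + H̃` everywhere.
In the mass metric `is ⊥ s` and `|is| = |s| = 1`, so Saari's decomposition reads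
`⟨y, y⟩ = ν² + J̃² + ⟨y_hor, y_hor⟩`; on `H̃ = 0` this turns `ν'` into the sum of squares
`K_sh + ½J̃²`.
-/

open Finset

noncomputable def massInner {N : ℕ} (m : Fin N → ℝ) (q v : Fin N → ℂ) : ℝ :=
  ∑ a, m a * (q a * (starRingEnd ℂ) (v a)).re

open Complex
open scoped InnerProductSpace

section MassInner

variable {N : ℕ} (m : Fin N → ℝ)

theorem massInner_eq_sum_inner (q v : Fin N → ℂ) :
    massInner m q v = ∑ a, m a * ⟪q a, v a⟫_ℝ := by
  refine sum_congr rfl fun a _ => ?_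
  rw [real_inner_comm, Complex.inner]

theorem massInner_comm (q v : Fin N → ℂ) : massInner m q v = massInner m v q := by
  simp only [massInner_eq_sum_inner, real_inner_comm]

theorem massInner_self_nonneg (hm : ∀ a, 0 ≤ m a) (q : Fin N → ℂ) : 0 ≤ massInner m q q := by
  rw [massInner_eq_sum_inner]
  exact sum_nonneg fun a _ => mul_nonneg (hm a) real_inner_self_nonneg

theorem massInner_sub_left (q q' v : Fin N → ℂ) :
    massInner m (q - q') v = massInner m q v - massInner m q' v := by
  simp only [massInner_eq_sum_inner, Pi.sub_apply, inner_sub_left, mul_sub, sum_sub_distrib]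

theorem massInner_smul_left (c : ℝ) (q v : Fin N → ℂ) :
    massInner m (c • q) v = c * massInner m q v := by
  simp only [massInner_eq_sum_inner, Pi.smul_apply, real_inner_smul_left, mul_sum, mul_left_comm]

theorem massInner_sub_right (q v v' : Fin N → ℂ) :
    massInner m q (v - v') = massInner m q v - massInner m q v' := by
  simp only [massInner_comm m q, massInner_sub_left]

theorem massInner_add_right (q v v' : Fin N → ℂ) :
    massInner m q (v + v') = massInner m q v + massInner m q v' := by
  simp only [massInner_eq_sum_inner, Pi.add_apply, inner_add_right, mul_add, sum_add_distrib]

theorem massInner_smul_right (c : ℝ) (q v : Fin N → ℂ) :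
    massInner m q (c • v) = c * massInner m q v := by
  rw [massInner_comm, massInner_smul_left, massInner_comm]

theorem massInner_I_smul_self (q : Fin N → ℂ) : massInner m (I • q) q = 0 := by
  simp [massInner_eq_sum_inner, Complex.inner, mul_comm]

theorem massInner_I_smul_I_smul (q v : Fin N → ℂ) :
    massInner m (I • q) (I • v) = massInner m q v := by
  simp [massInner_eq_sum_inner, Complex.inner, mul_comm]

theorem HasDerivAt.massInner {u v : ℝ → Fin N → ℂ} {u' v' : Fin N → ℂ} {t : ℝ}
    (hu : HasDerivAt u u' t) (hv : HasDerivAt v v' t) :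
    HasDerivAt (fun t => massInner m (u t) (v t))
      (massInner m u' (v t) + massInner m (u t) v') t := by
  simp only [massInner_eq_sum_inner, ← sum_add_distrib, ← mul_add]
  refine HasDerivAt.fun_sum fun a _ => ?_
  have := ((hasDerivAt_pi.1 hu a).inner ℝ (hasDerivAt_pi.1 hv a)).const_mul (m a)
  rwa [add_comm] at this

theorem massInner_self_horizontal {s y : Fin N → ℂ} {ν J : ℝ} (hs : massInner m s s = 1)
    (hν : massInner m s y = ν) (hJ : massInner m (fun a => I * s a) y = J) :
    massInner m (fun a => y a - ν • s a - J • (I * s a))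
      (fun a => y a - ν • s a - J • (I * s a)) = massInner m y y - ν ^ 2 - J ^ 2 := by
  change massInner m (y - ν • s - J • I • s) (y - ν • s - J • I • s) = _
  change massInner m (I • s) y = J at hJ
  have hsIs : massInner m s (I • s) = 0 := by rw [massInner_comm, massInner_I_smul_self]
  simp only [massInner_sub_left, massInner_sub_right, massInner_smul_left, massInner_smul_right,
    massInner_comm m y, massInner_I_smul_self, massInner_I_smul_I_smul, hsIs, hs, hν, hJ]
  ring

theorem hasDerivAt_radialVelocity {s y : ℝ → Fin N → ℂ} {g : Fin N → ℂ} {τ ν U : ℝ}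
    (hν : massInner m (s τ) (y τ) = ν) (hEuler : massInner m (s τ) g = -U)
    (hs : HasDerivAt s (y τ - ν • s τ) τ) (hy : HasDerivAt y (g + ((1 / 2 : ℝ) * ν) • y τ) τ) :
    HasDerivAt (fun τ => massInner m (s τ) (y τ))
      ((1 / 2) * massInner m (y τ) (y τ) - (1 / 2) * ν ^ 2
        + ((1 / 2) * massInner m (y τ) (y τ) - U)) τ := by
  convert hs.massInner m hy using 1
  rw [massInner_sub_left, massInner_smul_left, massInner_add_right, massInner_smul_right, hν,
    hEuler]
  ring

end MassInner

theorem nu_derivative_on_collision_manifold_general {N : ℕ}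
    (m : Fin N → ℝ) (hm : ∀ a, 0 < m a)
    (U : (Fin N → ℂ) → ℝ) (gradU : (Fin N → ℂ) → (Fin N → ℂ))
    (s y : ℝ → Fin N → ℂ) (ν Jt Ksh : ℝ → ℝ) (yhor : ℝ → Fin N → ℂ)
    (hν : ∀ τ, ν τ = massInner m (s τ) (y τ))
    (hJt : ∀ τ, Jt τ = massInner m (fun a => Complex.I * s τ a) (y τ))
    (hyhor : ∀ τ, yhor τ = fun a => y τ a - (ν τ) • s τ a
      - (Jt τ) • (Complex.I * s τ a))
    (hKsh : ∀ τ, Ksh τ = (1 / 2) * massInner m (yhor τ) (yhor τ))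
    (hunit : ∀ τ, massInner m (s τ) (s τ) = 1)
    -- Euler identity and rotation invariance for the potential
    (hEuler : ∀ τ, massInner m (s τ) (gradU (s τ)) = -U (s τ))
    -- the solution lies in the full collision manifold: `H̃ = 0`
    (hH : ∀ τ, (1 / 2) * massInner m (y τ) (y τ) - U (s τ) = 0)
    (hs : ∀ τ, HasDerivAt s (y τ - ν τ • s τ) τ)
    (hy : ∀ τ, HasDerivAt y (gradU (s τ) + ((1 / 2 : ℝ) * ν τ) • y τ) τ) :
    ∀ τ : ℝ,
      HasDerivAt (fun τ => massInner m (s τ) (y τ))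
        (Ksh τ + (1 / 2) * (Jt τ) ^ 2) τ ∧
      0 ≤ Ksh τ + (1 / 2) * (Jt τ) ^ 2 := by
  intro τ
  have hKsh_eq : Ksh τ = (1 / 2) * (massInner m (y τ) (y τ) - ν τ ^ 2 - Jt τ ^ 2) := by
    rw [hKsh, hyhor, massInner_self_horizontal m (hunit τ) (hν τ).symm (hJt τ).symm]
  have hderiv := hasDerivAt_radialVelocity m (hν τ).symm (hEuler τ) (hs τ) (hy τ)
  rw [hH τ] at hderiv
  refine ⟨hderiv.congr_deriv (by rw [hKsh_eq]; ring), ?_⟩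
  have hKsh_nonneg : 0 ≤ Ksh τ := by
    rw [hKsh]
    exact mul_nonneg (by norm_num) (massInner_self_nonneg m (fun a => (hm a).le) _)
  positivity

/-- Gradient-like behaviour on the full collision manifold
`M₀ = {r = 0, H̃ = 0}`: along any solution of the blown-up equations lying in
`M₀`, one has `ν' = K_sh + ½J̃² ≥ 0`; in particular `ν` is nondecreasing. -/
theorem nu_derivative_on_collision_manifold {N : ℕ}
    (m : Fin N → ℝ) (hm : ∀ a, 0 < m a)
    (U : (Fin N → ℂ) → ℝ) (gradU : (Fin N → ℂ) → (Fin N → ℂ))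
    (s y : ℝ → Fin N → ℂ) (ν Jt Ksh : ℝ → ℝ) (yhor : ℝ → Fin N → ℂ)
    (hν : ∀ τ, ν τ = massInner m (s τ) (y τ))
    (hJt : ∀ τ, Jt τ = massInner m (fun a => Complex.I * s τ a) (y τ))
    (hyhor : ∀ τ, yhor τ = fun a => y τ a - (ν τ) • s τ a
      - (Jt τ) • (Complex.I * s τ a))
    (hKsh : ∀ τ, Ksh τ = (1 / 2) * massInner m (yhor τ) (yhor τ))
    (hunit : ∀ τ, massInner m (s τ) (s τ) = 1)
    -- Euler identity and rotation invariance for the potential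
    (hEuler : ∀ τ, massInner m (s τ) (gradU (s τ)) = -U (s τ))
    (hrot : ∀ τ, massInner m (fun a => Complex.I * s τ a) (gradU (s τ)) = 0)
    -- the solution lies in the full collision manifold: `H̃ = 0`
    (hH : ∀ τ, (1 / 2) * massInner m (y τ) (y τ) - U (s τ) = 0)
    (hs : ∀ τ, HasDerivAt s (y τ - ν τ • s τ) τ)
    (hy : ∀ τ, HasDerivAt y (gradU (s τ) + ((1 / 2 : ℝ) * ν τ) • y τ) τ) :
    ∀ τ : ℝ,
      HasDerivAt (fun τ => massInner m (s τ) (y τ))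
        (Ksh τ + (1 / 2) * (Jt τ) ^ 2) τ ∧
      0 ≤ Ksh τ + (1 / 2) * (Jt τ) ^ 2 :=
  nu_derivative_on_collision_manifold_general m hm U gradU s y ν Jt Ksh yhor hν hJt hyhor hKsh hunit
    hEuler hH hs hy
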